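/- arXiv:0810.1201 — 5 statements merged into one kernel-verified Lean document; each statement's English description precedes it below -/
import Mathlib

section
/- Let V be an n-dimensional vector space over a field 𝕜, let u : Fin k → V be vectors and p : Fin k → V* be covectors, and let A : V → V be the linear map A = id_V + Σ_{i=1}^{k} u_i ⊗ p_i, i.e. A(x) = x + Σ_{i=1}^{k} p_i(x)·u_i. Then det A = 1 + Σ over all nonempty subsets S ⊆ {1,…,k} with |S| ≤ min(n,k) of D(p,u,S). (Equivalently, det A = Σ over all subsets S ⊆ {1,…,k} of D(p,u,S), with the empty set contributing 1, since terms with |S| > n vanish.) -/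
open Module

/-- `D p u S` : the determinant of the `|S| × |S|` matrix `(p i (u j))_{i, j ∈ S}`;
it equals the wedge `⋀_{i ∈ S} p i` evaluated on the family `(u i)_{i ∈ S}`. -/
noncomputable def detD {𝕜 V : Type*} [Field 𝕜] [AddCommGroup V] [Module 𝕜 V] {k : ℕ}
    (p : Fin k → Dual 𝕜 V) (u : Fin k → V) (S : Finset (Fin k)) : 𝕜 :=
  Matrix.det (Matrix.of fun i j : {a // a ∈ S} => p i (u j))

/-- Auxiliary: det of a matrix whose rows are either rows of `M` (on `S`) or rows of `1`
equals the principal minor of `M` on `S`. -/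
lemma det_piecewise_one {𝕜 ι : Type*} [Field 𝕜] [Fintype ι] [DecidableEq ι]
    (M : Matrix ι ι 𝕜) (S : Finset ι) :
    Matrix.det (Matrix.of (S.piecewise M (1 : Matrix ι ι 𝕜))) =
      Matrix.det (M.submatrix (Subtype.val : {a // a ∈ S} → ι) Subtype.val) := by
  classical
  let e : {a // a ∈ S} ⊕ {a // a ∉ S} ≃ ι := Equiv.sumCompl (· ∈ S)
  rw [← Matrix.det_submatrix_equiv_self e]
  have he : (Matrix.of (S.piecewise M (1 : Matrix ι ι 𝕜))).submatrix e e =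
      Matrix.fromBlocks (M.submatrix Subtype.val Subtype.val)
        (M.submatrix Subtype.val Subtype.val) 0 1 := by
    ext i j
    cases i with
    | inl i =>
      cases j with
      | inl j => simp [e, Finset.piecewise, i.2]
      | inr j => simp [e, Finset.piecewise, i.2]
    | inr i =>
      cases j with
      | inl j =>
        have hij : (i : ι) ≠ (j : ι) := fun h => i.2 (h ▸ j.2)
        simp [e, Finset.piecewise, i.2, Matrix.one_apply, hij]
      | inr j =>
        simp [e, Finset.piecewise, i.2, Matrix.one_apply,
          Subtype.ext_iff]
  rw [he, Matrix.det_fromBlocks_zero₂₁, Matrix.det_one, mul_one]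

/-- Auxiliary: `det (1 + M)` is the sum of all principal minors. -/
lemma det_one_add_eq_sum_minors {𝕜 ι : Type*} [Field 𝕜] [Fintype ι] [DecidableEq ι]
    (M : Matrix ι ι 𝕜) :
    Matrix.det (1 + M) =
      ∑ S : Finset ι,
        Matrix.det (M.submatrix (Subtype.val : {a // a ∈ S} → ι) Subtype.val) := by
  classical
  have h1 : (1 + M : Matrix ι ι 𝕜) = ((fun i => M i) + fun i => (1 : Matrix ι ι 𝕜) i) := by
    ext i j; simp [add_comm]
  have h2 := (Matrix.detRowAlternating (R := 𝕜) (n := ι)).toMultilinearMap.map_add_univ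
    (fun i => M i) (fun i => (1 : Matrix ι ι 𝕜) i)
  have h4 : Matrix.det (1 + M) =
      ∑ s : Finset ι, (Matrix.detRowAlternating (R := 𝕜) (n := ι)).toMultilinearMap
        (s.piecewise (fun i => M i) fun i => (1 : Matrix ι ι 𝕜) i) := by
    rw [h1]; exact h2
  rw [h4]
  refine Finset.sum_congr rfl fun S _ => ?_
  rw [← det_piecewise_one M S]
  rfl

/-- Auxiliary: a minor of size larger than the dimension vanishes. -/
lemma detD_eq_zero_of_lt_card {𝕜 V : Type*} [Field 𝕜] [AddCommGroup V] [Module 𝕜 V]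
    [FiniteDimensional 𝕜 V] {k : ℕ} (p : Fin k → Dual 𝕜 V) (u : Fin k → V)
    (S : Finset (Fin k)) (hS : finrank 𝕜 V < S.card) :
    detD p u S = 0 := by
  classical
  by_contra hne
  have hu : IsUnit ((Matrix.of fun i j : {a // a ∈ S} => p i (u j))) := by
    rw [Matrix.isUnit_iff_isUnit_det]
    exact Ne.isUnit hne
  have hli := Matrix.linearIndependent_cols_iff_isUnit.mpr hu
  -- the columns are `φ (u j)` for `φ = (p i)_i : V →ₗ ({a // a ∈ S} → 𝕜)`
  let φ : V →ₗ[𝕜] ({a // a ∈ S} → 𝕜) := LinearMap.pi fun i => p i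
  have hli' : LinearIndependent 𝕜 (φ ∘ fun j : {a // a ∈ S} => u j) := hli
  have hli2 := hli'.of_comp φ
  have hcard := hli2.fintype_card_le_finrank
  rw [Fintype.card_coe] at hcard
  omega

/-- for `A = id_V + ∑ i, u i ⊗ p i` one has
`det A = 1 + ∑_{∅ ≠ S ⊆ {1,…,k}, |S| ≤ min n k} D(p, u, S)`. -/
theorem det_id_add_sum_dyadic
    (𝕜 V : Type*) [Field 𝕜] [AddCommGroup V] [Module 𝕜 V] [FiniteDimensional 𝕜 V]
    {n k : ℕ} (hn : finrank 𝕜 V = n) (u : Fin k → V) (p : Fin k → Dual 𝕜 V) :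
    LinearMap.det (LinearMap.id + ∑ i, (p i).smulRight (u i)) =
      1 + ∑ S ∈ Finset.univ.filter
            (fun S : Finset (Fin k) => S.Nonempty ∧ S.card ≤ min n k),
          detD p u S := by
  classical
  let b : Basis (Fin n) 𝕜 V := finBasisOfFinrankEq 𝕜 V hn
  -- matrices
  let U : Matrix (Fin n) (Fin k) 𝕜 := Matrix.of fun i j => b.repr (u j) i
  let P : Matrix (Fin k) (Fin n) 𝕜 := Matrix.of fun i j => p i (b j)
  have hM : LinearMap.toMatrix b b (LinearMap.id + ∑ i, (p i).smulRight (u i)) =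
      1 + U * P := by
    ext i l
    simp only [LinearMap.toMatrix_apply, LinearMap.add_apply, LinearMap.id_apply,
      LinearMap.sum_apply, LinearMap.smulRight_apply, map_add, map_sum, map_smul,
      Finsupp.coe_add, Finsupp.coe_smul, Finsupp.coe_finset_sum, Pi.add_apply,
      Pi.smul_apply, Finset.sum_apply, smul_eq_mul, Matrix.add_apply, Matrix.mul_apply,
      Matrix.one_apply, Basis.repr_self_apply, U, P, Matrix.of_apply]
    rw [Finset.sum_congr rfl fun j _ => mul_comm ((b.repr (u j)) i) ((p j) (b l))]
    simp [eq_comm]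
  have hPU : P * U = Matrix.of fun i j : Fin k => p i (u j) := by
    ext i j
    simp only [Matrix.mul_apply, Matrix.of_apply, P, U]
    calc ∑ l, p i (b l) * b.repr (u j) l
        = p i (∑ l, b.repr (u j) l • b l) := by
          rw [map_sum]; exact Finset.sum_congr rfl fun l _ => by
            rw [map_smul, smul_eq_mul, mul_comm]
      _ = p i (u j) := by rw [b.sum_repr (u j)]
  have hdet : LinearMap.det (LinearMap.id + ∑ i, (p i).smulRight (u i)) =
      ∑ S : Finset (Fin k), detD p u S := by
    rw [← LinearMap.det_toMatrix b, hM, Matrix.det_one_add_mul_comm, hPU,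
      det_one_add_eq_sum_minors]
    exact Finset.sum_congr rfl fun S _ => rfl
  rw [hdet]
  -- split the sum
  rw [← Finset.sum_filter_add_sum_filter_not Finset.univ
    (fun S : Finset (Fin k) => S.Nonempty ∧ S.card ≤ min n k) (detD p u), add_comm]
  congr 1
  -- the remaining sum is the empty-set term, which is 1
  rw [Finset.sum_eq_single (∅ : Finset (Fin k))]
  · show detD p u ∅ = 1
    have : IsEmpty {a // a ∈ (∅ : Finset (Fin k))} := by
      constructor; rintro ⟨a, ha⟩; exact absurd ha (Finset.notMem_empty a)
    exact Matrix.det_isEmpty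
  · intro S hS hSne
    simp only [Finset.mem_filter, Finset.mem_univ, true_and, not_and, not_le] at hS
    have hSnonempty : S.Nonempty := Finset.nonempty_iff_ne_empty.mpr hSne
    have hcard : min n k < S.card := hS hSnonempty
    have hk : S.card ≤ k := by
      simpa using Finset.card_le_card (Finset.subset_univ S)
    have : n < S.card := by omega
    exact detD_eq_zero_of_lt_card p u S (hn ▸ this)
  · intro h
    simp at h
end

section
/- Let V be an n-dimensional vector space over a field 𝕜 with n ≥ 2, let u : Fin k → V be vectors and p : Fin k → V* be covectors, and let A = id_V + Σ_{i=1}^{k} u_i ⊗ p_i. If det A ≠ 0, then for every x ∈ V and every q ∈ V*: q(A⁻¹x) · det A = q(x) + Σ over all nonempty subsets S ⊆ {1,…,k} with |S| ≤ min(n−1,k) of E(q,x;p,u,S). -/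
open Module

open Matrix


private theorem det_piecewise_single {R ι : Type*} [CommRing R] [Fintype ι] [DecidableEq ι]
    (M : Matrix ι ι R) (s : Finset ι) :
    (Matrix.of (s.piecewise (M : ι → ι → R) (fun i => Pi.single i (1:R)))).det =
      (M.submatrix (Subtype.val : {a // a ∈ s} → ι) Subtype.val).det := by
  classical
  set B : Matrix ι ι R := Matrix.of (s.piecewise (M : ι → ι → R) (fun i => Pi.single i (1:R)))
  let e : {x // x ∈ s} ⊕ {x // x ∉ s} ≃ ι := Equiv.sumCompl (· ∈ s)
  have h2 : B.submatrix e e =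
      Matrix.fromBlocks (M.submatrix (Subtype.val : {a // a ∈ s} → ι) Subtype.val)
        (M.submatrix (Subtype.val : {a // a ∈ s} → ι) (Subtype.val : {a // a ∉ s} → ι))
        0 1 := by
    ext i j
    rcases i with i | i <;> rcases j with j | j <;>
      simp only [submatrix_apply, fromBlocks_apply₁₁, fromBlocks_apply₁₂, fromBlocks_apply₂₁,
        fromBlocks_apply₂₂, Equiv.sumCompl_apply_inl, Equiv.sumCompl_apply_inr, e, B,
        Matrix.of_apply, Finset.piecewise, i.2, j.2, if_pos, if_neg, Matrix.zero_apply,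
        Matrix.one_apply, Pi.single_apply]
    · have hne : (↑j : ι) ≠ ↑i := fun h => i.2 (h ▸ j.2)
      simp [Pi.single_apply, hne]
    · simp [Pi.single_apply, Subtype.ext_iff, eq_comm]
  rw [← Matrix.det_submatrix_equiv_self e B, h2, Matrix.det_fromBlocks_zero₂₁, Matrix.det_one,
    mul_one]

private theorem det_diagonal_add {R ι : Type*} [CommRing R] [Fintype ι] [DecidableEq ι]
    (d : ι → R) (M : Matrix ι ι R) :
    (Matrix.diagonal d + M).det =
      ∑ s : Finset ι, (∏ i ∈ sᶜ, d i) *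
        (M.submatrix (Subtype.val : {a // a ∈ s} → ι) Subtype.val).det := by
  classical
  have h0 : (Matrix.diagonal d + M).det =
      (Matrix.detRowAlternating : (ι → R) [⋀^ι]→ₗ[R] R).toMultilinearMap
        ((M : ι → ι → R) + (Matrix.diagonal d : ι → ι → R)) := by
    have h1 : Matrix.diagonal d + M
        = ((M : ι → ι → R) + (Matrix.diagonal d : ι → ι → R) : ι → ι → R) := by
      ext i j; exact add_comm _ _
    rw [h1]; rfl
  rw [h0]
  refine (MultilinearMap.map_add_univ _ (M : ι → ι → R) (Matrix.diagonal d : ι → ι → R)).trans ?_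
  refine Finset.sum_congr rfl fun s _ => ?_
  have key : s.piecewise (M : ι → ι → R) (Matrix.diagonal d : ι → ι → R) =
      sᶜ.piecewise (fun i => d i • (sᶜ.piecewise (fun i => Pi.single i (1:R)) M) i)
        (sᶜ.piecewise (fun i => Pi.single i (1:R)) M) := by
    ext i j
    by_cases hi : i ∈ s
    · simp [Finset.piecewise, hi]
    · simp [Finset.piecewise, hi, Matrix.diagonal, Pi.single_apply, eq_comm]
  rw [key, MultilinearMap.map_piecewise_smul]
  erw [Finset.piecewise_compl]
  have h3 : (Matrix.detRowAlternating : (ι → R) [⋀^ι]→ₗ[R] R).toMultilinearMap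
      (s.piecewise (M : ι → ι → R) fun i => Pi.single i (1:R))
      = (Matrix.of (s.piecewise (M : ι → ι → R) fun i => Pi.single i (1:R))).det := rfl
  rw [h3, det_piecewise_single, smul_eq_mul]

private theorem det_gram_eq_zero {𝕜 V ι : Type*} [Field 𝕜] [AddCommGroup V] [Module 𝕜 V]
    [FiniteDimensional 𝕜 V] [Fintype ι] [DecidableEq ι] (f : ι → Dual 𝕜 V) (v : ι → V)
    (h : finrank 𝕜 V < Fintype.card ι) :
    (Matrix.of fun i j => f i (v j)).det = 0 := by
  have hli : ¬ LinearIndependent 𝕜 f := fun hl => by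
    have := hl.fintype_card_le_finrank
    rw [Subspace.dual_finrank_eq] at this
    omega
  obtain ⟨g, hg0, i0, hi0⟩ := Fintype.not_linearIndependent_iff.1 hli
  refine Matrix.exists_vecMul_eq_zero_iff.1 ⟨g, fun hg => hi0 (by rw [hg]; rfl), ?_⟩
  ext j
  have := congrArg (fun φ : Dual 𝕜 V => φ (v j)) hg0
  simpa [Matrix.vecMul, dotProduct] using this

private theorem key_matrix {𝕜 : Type*} [Field 𝕜] {n k : ℕ}
    (Uc : Matrix (Fin n) (Fin k) 𝕜) (Pm : Matrix (Fin k) (Fin n) 𝕜)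
    (xv qv : Fin n → 𝕜) (hdet : (1 + Uc * Pm).det ≠ 0) :
    (Matrix.fromBlocks
        (Matrix.of fun _ _ : Unit => qv ⬝ᵥ xv)
        (Matrix.of fun (_ : Unit) j => qv ⬝ᵥ (fun r => Uc r j))
        (Matrix.of fun i (_ : Unit) => (fun r => Pm i r) ⬝ᵥ xv)
        (1 + Pm * Uc)).det
      = qv ⬝ᵥ ((1 + Uc * Pm)⁻¹ *ᵥ xv) * (1 + Uc * Pm).det := by
  classical
  set M : Matrix (Fin n) (Fin n) 𝕜 := 1 + Uc * Pm with hM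
  haveI : Invertible M := M.invertibleOfIsUnitDet (isUnit_iff_ne_zero.2 hdet)
  -- rectangular factors
  set Y' : Matrix (Unit ⊕ Fin k) (Fin n ⊕ Unit) 𝕜 :=
    Matrix.fromBlocks (Matrix.of fun _ r => qv r) (-1) Pm 0 with hY'
  set X' : Matrix (Fin n ⊕ Unit) (Unit ⊕ Fin k) 𝕜 :=
    Matrix.fromBlocks (Matrix.of fun r _ => xv r) Uc 1 0 with hX'
  have h1 : Matrix.fromBlocks
        (Matrix.of fun _ _ : Unit => qv ⬝ᵥ xv)
        (Matrix.of fun (_ : Unit) j => qv ⬝ᵥ (fun r => Uc r j))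
        (Matrix.of fun i (_ : Unit) => (fun r => Pm i r) ⬝ᵥ xv)
        (1 + Pm * Uc) = 1 + Y' * X' := by
    rw [hY', hX', Matrix.fromBlocks_multiply]
    ext i j
    rcases i with i | i <;> rcases j with j | j <;>
      simp [Matrix.fromBlocks, Matrix.one_apply, Matrix.mul_apply, dotProduct,
        Matrix.neg_apply, add_comm]
  set colx : Matrix (Fin n) Unit 𝕜 := Matrix.of fun r _ => xv r with hcolx
  set rowq : Matrix Unit (Fin n) 𝕜 := Matrix.of fun _ r => qv r with hrowq
  have h3 : (1 : Matrix (Fin n ⊕ Unit) (Fin n ⊕ Unit) 𝕜) + X' * Y' =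
      Matrix.fromBlocks (M + colx * rowq) (-colx) rowq 0 := by
    rw [hX', hY', Matrix.fromBlocks_multiply]
    ext i j
    rcases i with i | i <;> rcases j with j | j <;>
      simp [hM, Matrix.fromBlocks, Matrix.one_apply, Matrix.mul_apply, Matrix.neg_apply,
        hcolx, hrowq, add_comm, add_assoc, add_left_comm]
  have h4 : Matrix.fromBlocks (M + colx * rowq) (-colx) rowq (0 : Matrix Unit Unit 𝕜) =
      Matrix.fromBlocks M (-colx) rowq 0 * Matrix.fromBlocks 1 0 (-rowq) 1 := by
    rw [Matrix.fromBlocks_multiply]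
    simp [Matrix.neg_mul, Matrix.mul_neg]
  have h5 : (Matrix.fromBlocks M (-colx) rowq (0 : Matrix Unit Unit 𝕜)).det =
      M.det * (qv ⬝ᵥ (M⁻¹ *ᵥ xv)) := by
    rw [Matrix.det_fromBlocks₁₁, Matrix.invOf_eq_nonsing_inv]
    congr 1
    rw [Matrix.det_unique]
    simp [Matrix.sub_apply, Matrix.mul_apply, dotProduct, Matrix.mulVec, Matrix.neg_apply,
      hcolx, hrowq, Finset.sum_mul, Finset.mul_sum, mul_assoc]
    exact Finset.sum_comm
  rw [h1, Matrix.det_one_add_mul_comm, h3, h4, Matrix.det_mul, h5,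
    Matrix.det_fromBlocks_zero₁₂, Matrix.det_one, Matrix.det_one, mul_one, mul_one, mul_comm]


/-- `E q x p u S` : the determinant of the `(|S|+1) × (|S|+1)` matrix whose first row is
`(q x, q (u j₁), …, q (u jᵢ))` and whose remaining rows are
`(p jₗ x, p jₗ (u j₁), …, p jₗ (u jᵢ))` for `S = {j₁ < … < jᵢ}`; it equals
`(q ∧ p j₁ ∧ … ∧ p jᵢ)(x, u j₁, …, u jᵢ)`. -/
noncomputable def detE {𝕜 V : Type*} [Field 𝕜] [AddCommGroup V] [Module 𝕜 V] {k : ℕ}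
    (q : Dual 𝕜 V) (x : V) (p : Fin k → Dual 𝕜 V) (u : Fin k → V) (S : Finset (Fin k)) : 𝕜 :=
  Matrix.det (Matrix.of fun i j : Option {a // a ∈ S} =>
    (i.elim q fun l => p l) (j.elim x fun l => u l))

/-- for `A = id_V + ∑ i, u i ⊗ p i` with `det A ≠ 0`, every `x ∈ V`, `q ∈ V*`
satisfy `q (A⁻¹ x) * det A = q x + ∑_{∅ ≠ S ⊆ {1,…,k}, |S| ≤ min (n-1) k} E(q, x; p, u, S)`. -/
theorem apply_inverse_id_add_sum_dyadic
    (𝕜 V : Type*) [Field 𝕜] [AddCommGroup V] [Module 𝕜 V] [FiniteDimensional 𝕜 V]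
    {n k : ℕ} (hn : finrank 𝕜 V = n) (h2 : 2 ≤ n)
    (u : Fin k → V) (p : Fin k → Dual 𝕜 V)
    (A : Module.End 𝕜 V) (hA : A = LinearMap.id + ∑ i, (p i).smulRight (u i))
    (hdet : LinearMap.det A ≠ 0) (x : V) (q : Dual 𝕜 V) :
    q (Ring.inverse A x) * LinearMap.det A =
      q x + ∑ S ∈ Finset.univ.filter
              (fun S : Finset (Fin k) => S.Nonempty ∧ S.card ≤ min (n - 1) k),
            detE q x p u S := by
  classical
  let b : Basis (Fin n) 𝕜 V := (Module.finBasis 𝕜 V).reindex (finCongr hn)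
  set Uc : Matrix (Fin n) (Fin k) 𝕜 := Matrix.of fun r j => b.repr (u j) r with hUc
  set Pm : Matrix (Fin k) (Fin n) 𝕜 := Matrix.of fun i r => p i (b r) with hPm
  set xv : Fin n → 𝕜 := fun r => b.repr x r with hxv
  set qv : Fin n → 𝕜 := fun r => q (b r) with hqv
  have happly : ∀ (φ : Dual 𝕜 V) (y : V),
      φ y = (fun r => φ (b r)) ⬝ᵥ (fun r => b.repr y r) := by
    intro φ y
    conv_lhs => rw [← b.sum_repr y]
    simp [dotProduct, mul_comm]
    conv_lhs => rw [← b.sum_repr y]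
    simp only [map_sum, map_smul, smul_eq_mul]
  -- the matrix of A
  have hAM : LinearMap.toMatrix b b A = 1 + Uc * Pm := by
    rw [hA, map_add, map_sum, LinearMap.toMatrix_id]
    congr 1
    ext r c
    rw [Matrix.sum_apply]
    simp only [LinearMap.toMatrix_apply, LinearMap.smulRight_apply, _root_.map_smul, hUc, hPm,
      Matrix.mul_apply, Matrix.of_apply, smul_eq_mul]
    exact Finset.sum_congr rfl fun i _ => mul_comm _ _
  set M : Matrix (Fin n) (Fin n) 𝕜 := 1 + Uc * Pm with hMdef
  have hdetM : M.det = LinearMap.det A := by rw [← hAM, LinearMap.det_toMatrix]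
  have hMdet0 : M.det ≠ 0 := by rw [hdetM]; exact hdet
  -- A is a unit, and the matrix of its Ring.inverse is M⁻¹
  have hAunit : IsUnit A := by
    refine isUnit_iff_exists.2 ⟨(LinearMap.toMatrix b b).symm M⁻¹, ?_, ?_⟩ <;>
    · apply (LinearMap.toMatrix b b).injective
      rw [Module.End.mul_eq_comp, LinearMap.toMatrix_comp b b b, hAM,
        LinearEquiv.apply_symm_apply, Module.End.one_eq_id, LinearMap.toMatrix_id]
      first
        | exact Matrix.mul_nonsing_inv _ (isUnit_iff_ne_zero.2 hMdet0)
        | exact Matrix.nonsing_inv_mul _ (isUnit_iff_ne_zero.2 hMdet0)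
  have hinv : M⁻¹ = LinearMap.toMatrix b b (Ring.inverse A) := by
    apply Matrix.inv_eq_left_inv
    rw [← hAM, ← LinearMap.toMatrix_comp b b b, ← Module.End.mul_eq_comp,
      Ring.inverse_mul_cancel _ hAunit, Module.End.one_eq_id, LinearMap.toMatrix_id]
  have hreprinv : (fun r => b.repr (Ring.inverse A x) r) = M⁻¹ *ᵥ xv := by
    rw [hinv]
    exact (LinearMap.toMatrix_mulVec_repr b b (Ring.inverse A) x).symm
  have hLHS : q (Ring.inverse A x) * LinearMap.det A = qv ⬝ᵥ (M⁻¹ *ᵥ xv) * M.det := by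
    rw [hdetM, happly q (Ring.inverse A x), hreprinv, hqv]
  -- the big Option-indexed matrix
  set dd : Option (Fin k) → 𝕜 := fun o => o.elim 0 (fun _ => 1) with hdd
  set G : Matrix (Option (Fin k)) (Option (Fin k)) 𝕜 :=
    Matrix.of (fun i j => (i.elim q fun l => p l) (j.elim x fun l => u l)) with hG
  set N : Matrix (Option (Fin k)) (Option (Fin k)) 𝕜 := Matrix.diagonal dd + G with hN
  let ee : Unit ⊕ Fin k ≃ Option (Fin k) :=
    ⟨Sum.elim (fun _ => none) some, fun o => o.elim (Sum.inl ()) Sum.inr,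
      by rintro (⟨⟩ | j) <;> rfl, by rintro (_ | j) <;> rfl⟩
  have hNsub : N.submatrix ee ee = Matrix.fromBlocks
      (Matrix.of fun _ _ : Unit => qv ⬝ᵥ xv)
      (Matrix.of fun (_ : Unit) j => qv ⬝ᵥ (fun r => Uc r j))
      (Matrix.of fun i (_ : Unit) => (fun r => Pm i r) ⬝ᵥ xv)
      (1 + Pm * Uc) := by
    ext i j
    rcases i with i | i <;> rcases j with j | j <;>
      simp only [Matrix.submatrix_apply, hN, Matrix.add_apply, hG,
        Matrix.of_apply, Option.elim, Matrix.fromBlocks_apply₁₁, Matrix.fromBlocks_apply₁₂,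
        Matrix.fromBlocks_apply₂₁, Matrix.fromBlocks_apply₂₂,
        ee, Equiv.coe_fn_mk, Sum.elim_inl, Sum.elim_inr,
        Matrix.diagonal_apply_eq, Matrix.diagonal_apply_ne' _ (Option.some_ne_none _),
        Matrix.diagonal_apply_ne _ (Option.some_ne_none _).symm]
    · show dd none + q x = qv ⬝ᵥ xv
      rw [show dd none = 0 from rfl, zero_add]
      exact happly q x
    · rw [zero_add]; exact happly q (u j)
    · rw [Matrix.diagonal_apply_ne _ (Option.some_ne_none i), zero_add]
      exact happly (p i) x
    · have hppuj := happly (p i) (u j)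
      by_cases hij : i = j
      · subst hij
        rw [Matrix.one_apply_eq, Matrix.diagonal_apply_eq]
        show (1:𝕜) + _ = 1 + _
        rw [hppuj]
        congr 1
      · rw [Matrix.one_apply_ne hij, zero_add,
          Matrix.diagonal_apply_ne _ (fun h => hij (Option.some_injective _ h)), zero_add, hppuj]
        simp [dotProduct, Matrix.mul_apply, hUc, hPm]
  have hNdet : N.det = q (Ring.inverse A x) * LinearMap.det A := by
    rw [hLHS, ← Matrix.det_submatrix_equiv_self ee N, hNsub]
    exact key_matrix Uc Pm xv qv hMdet0
  -- expansion of N.det over subsets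
  have hexp : N.det = ∑ s : Finset (Option (Fin k)),
      (if none ∈ s then (1:𝕜) else 0) *
        (G.submatrix (Subtype.val : {a // a ∈ s} → _) Subtype.val).det := by
    rw [hN, det_diagonal_add]
    refine Finset.sum_congr rfl fun s _ => ?_
    congr 1
    by_cases h : none ∈ s
    · rw [if_pos h]
      refine Finset.prod_eq_one fun i hi => ?_
      rcases i with _ | j
      · exact absurd h (by simpa using hi)
      · rfl
    · rw [if_neg h]
      exact Finset.prod_eq_zero (Finset.mem_compl.2 h) rfl
  -- each subset containing `none` gives a detE term
  have hdetG : ∀ s : Finset (Option (Fin k)), none ∈ s →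
      (G.submatrix (Subtype.val : {a // a ∈ s} → _) Subtype.val).det
        = detE q x p u (Finset.eraseNone s) := by
    intro s hs
    let g : Option {a // a ∈ Finset.eraseNone s} ≃ {a' // a' ∈ s} :=
    { toFun := fun o => o.elim ⟨none, hs⟩
        (fun l => ⟨some l.1, Finset.mem_eraseNone.1 l.2⟩)
      invFun := fun a => a.1.pbind (fun j hj => some ⟨j, Finset.mem_eraseNone.2 (hj ▸ a.2)⟩)
      left_inv := by rintro (_ | ⟨a, ha⟩) <;> rfl
      right_inv := by rintro ⟨_ | j, hj⟩ <;> rfl }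
    rw [detE, ← Matrix.det_submatrix_equiv_self g]
    congr 1
    ext i j
    rcases i with _ | i <;> rcases j with _ | j <;> rfl
  have hsum2 : N.det = ∑ T : Finset (Fin k), detE q x p u T := by
    rw [hexp]
    simp only [ite_mul, one_mul, zero_mul]
    rw [← Finset.sum_filter]
    refine Finset.sum_bij' (fun s _ => Finset.eraseNone s) (fun T _ => Finset.insertNone T)
      (fun _ _ => Finset.mem_univ _) ?_ ?_ ?_ ?_
    · intro T _
      simp [Finset.mem_filter]
    · intro s hs
      show Finset.insertNone (Finset.eraseNone s) = s
      rw [Finset.insertNone_eraseNone]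
      exact Finset.insert_eq_self.2 (Finset.mem_filter.1 hs).2
    · intro T _
      show Finset.eraseNone (Finset.insertNone T) = T
      exact Finset.eraseNone_insertNone T
    · intro s hs
      exact hdetG s (Finset.mem_filter.1 hs).2
  have hzeroE : ∀ T : Finset (Fin k), n ≤ T.card → detE q x p u T = 0 := by
    intro T hT
    rw [detE]
    refine det_gram_eq_zero (fun i : Option {a // a ∈ T} => i.elim q fun l => p l)
      (fun j : Option {a // a ∈ T} => j.elim x fun l => u l) ?_
    rw [hn, Fintype.card_option, Fintype.card_coe]
    omega
  have hE0 : detE q x p u ∅ = q x := by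
    haveI : IsEmpty {a : Fin k // a ∈ (∅ : Finset (Fin k))} := ⟨fun a => absurd a.2 (Finset.notMem_empty _)⟩
    rw [detE, Matrix.det_unique]
    rfl
  have hfinal : ∑ T : Finset (Fin k), detE q x p u T =
      q x + ∑ S ∈ Finset.univ.filter
              (fun S : Finset (Fin k) => S.Nonempty ∧ S.card ≤ min (n - 1) k),
            detE q x p u S := by
    have hnotmem : (∅ : Finset (Fin k)) ∉ Finset.univ.filter
        (fun S : Finset (Fin k) => S.Nonempty ∧ S.card ≤ min (n - 1) k) := by
      simp
    rw [← Finset.sum_subset (Finset.subset_univ (insert ∅ (Finset.univ.filter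
        (fun S : Finset (Fin k) => S.Nonempty ∧ S.card ≤ min (n - 1) k)))) ?_,
      Finset.sum_insert hnotmem, hE0]
    intro T _ hT
    rw [Finset.mem_insert, not_or] at hT
    have hmin : ¬ (T.card ≤ min (n - 1) k) := fun hc => hT.2 (Finset.mem_filter.2
      ⟨Finset.mem_univ _, Finset.nonempty_iff_ne_empty.2 hT.1, hc⟩)
    have hcardk : T.card ≤ k := le_trans (Finset.card_le_univ T) (by simp)
    rw [Nat.le_min] at hmin
    exact hzeroE T (by omega)
  rw [← hNdet, hsum2]
  exact hfinal
end

section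
/- Let V be an n-dimensional vector space over a field 𝕜, let B : V → V be an invertible linear map, let v : Fin k → V and p : Fin k → V*, and set Q = Σ_{i=1}^{k} v_i ⊗ p_i, u_i = B⁻¹v_i, and for each i ≥ 1 let α_i = Σ over subsets S ⊆ {1,…,k} with |S| = i of D(p,u,S) (so α_i = 0 for i > k). Assume d := 1 + Σ_{i=1}^{k} α_i ≠ 0. Then for every natural number m ≥ k, the operator B + Q is invertible and (B + Q)⁻¹ = B⁻¹ + d⁻¹ · Σ_{i=1}^{m} (−1)^i · (1 + Σ_{j=1}^{m−i} α_j) · (B⁻¹ ∘ Q)^i ∘ B⁻¹. -/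
open Module

open Polynomial Matrix in
private lemma det_row_id_outside {R : Type*} [CommRing R] {k : ℕ} (N : Matrix (Fin k) (Fin k) R)
    (S : Finset (Fin k)) :
    (Matrix.of fun i j => if i ∈ S then N i j else (1 : Matrix (Fin k) (Fin k) R) i j).det
      = (N.submatrix (Subtype.val : {a // a ∈ S} → Fin k) Subtype.val).det := by
  classical
  rw [← Matrix.det_submatrix_equiv_self (Equiv.sumCompl (· ∈ S))]
  have h : (Matrix.of fun i j =>
        if i ∈ S then N i j else (1 : Matrix (Fin k) (Fin k) R) i j).submatrix
      (Equiv.sumCompl (· ∈ S)) (Equiv.sumCompl (· ∈ S)) =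
      Matrix.fromBlocks (N.submatrix Subtype.val Subtype.val)
        (N.submatrix Subtype.val Subtype.val) 0 1 := by
    ext i j
    cases i with
    | inl i =>
      cases j with
      | inl j => simp [Matrix.submatrix_apply, i.2]
      | inr j => simp [Matrix.submatrix_apply, i.2]
    | inr i =>
      cases j with
      | inl j =>
        have hij : (i : Fin k) ≠ (j : Fin k) := fun h => i.2 (h ▸ j.2)
        simp [Matrix.submatrix_apply, i.2, Matrix.one_apply, hij]
      | inr j =>
        simp [Matrix.submatrix_apply, i.2, Matrix.one_apply, Subtype.ext_iff]
  rw [h, Matrix.det_fromBlocks_zero₂₁]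
  simp

open Polynomial Matrix in
private lemma charpoly_eq_sum_minors {R : Type*} [CommRing R] {k : ℕ}
    (N : Matrix (Fin k) (Fin k) R) :
    N.charpoly = ∑ S : Finset (Fin k),
      Polynomial.C ((-1 : R) ^ S.card *
        (N.submatrix (Subtype.val : {a // a ∈ S} → Fin k) Subtype.val).det) *
        Polynomial.X ^ (k - S.card) := by
  classical
  set a : Fin k → Fin k → R[X] := fun i j => -Polynomial.C (N i j) with ha
  set b : Fin k → Fin k → R[X] := fun i j =>
    Polynomial.X * (1 : Matrix (Fin k) (Fin k) R[X]) i j with hb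
  have hrow : charmatrix N = Matrix.of (a + b) := by
    ext i j : 2
    by_cases h : i = j
    · subst h
      simp only [ha, hb, Matrix.charmatrix_apply, Matrix.of_apply, Pi.add_apply,
        Matrix.diagonal_apply_eq, Matrix.one_apply_eq]
      ring_nf
    · simp [ha, hb, Matrix.charmatrix_apply, Matrix.one_apply, h, Matrix.diagonal_apply_ne _ h]
  have hdet : N.charpoly = Matrix.detRowAlternating (Matrix.of (a + b)) := by
    rw [Matrix.charpoly, hrow]; rfl
  rw [hdet]
  rw [show (Matrix.detRowAlternating (Matrix.of (a + b)) : R[X])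
      = Matrix.detRowAlternating.toMultilinearMap (a + b) from rfl]
  rw [MultilinearMap.map_add_univ]
  refine Finset.sum_congr rfl fun S _ => ?_
  set W : Matrix (Fin k) (Fin k) R[X] := Matrix.of fun i j =>
    if i ∈ S then Polynomial.C (N i j) else (1 : Matrix (Fin k) (Fin k) R[X]) i j with hWdef
  have hW : S.piecewise a b = fun i j =>
      (if i ∈ S then (-1 : R[X]) else Polynomial.X) * W i j := by
    funext i j
    by_cases h : i ∈ S
    · simp [Finset.piecewise_eq_of_mem _ _ _ h, ha, hWdef, h]
    · simp [Finset.piecewise_eq_of_notMem _ _ _ h, hb, hWdef, h]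
  have h1 : Matrix.detRowAlternating.toMultilinearMap (S.piecewise a b)
      = (Matrix.of fun i j => (if i ∈ S then (-1 : R[X]) else Polynomial.X) * W i j).det := by
    rw [hW]; rfl
  rw [h1, Matrix.det_mul_column]
  have hprod : (∏ i, (if i ∈ S then (-1 : R[X]) else Polynomial.X))
      = (-1 : R[X]) ^ S.card * Polynomial.X ^ (k - S.card) := by
    rw [Finset.prod_ite, Finset.prod_const, Finset.prod_const]
    congr 2
    · congr 1
      exact Finset.filter_univ_mem S
    · rw [show (Finset.filter (fun i => ¬ i ∈ S) Finset.univ) = Sᶜ by ext x; simp,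
        Finset.card_compl, Fintype.card_fin]
  have hdW : W.det = Polynomial.C ((N.submatrix (Subtype.val : {a // a ∈ S} → Fin k)
      Subtype.val).det) := by
    have := det_row_id_outside (N.map Polynomial.C) S
    have h2 : W = Matrix.of fun i j =>
        if i ∈ S then (N.map Polynomial.C) i j else (1 : Matrix (Fin k) (Fin k) R[X]) i j := rfl
    rw [h2, this, Matrix.submatrix_map]
    exact (RingHom.map_det Polynomial.C _).symm
  rw [hprod, hdW]
  simp only [_root_.map_mul, _root_.map_pow, _root_.map_neg, _root_.map_one]
  ring

open Polynomial Matrix in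
private lemma sum_minors_pow_eq_zero {R : Type*} [CommRing R] {k : ℕ}
    (N : Matrix (Fin k) (Fin k) R) :
    ∑ S : Finset (Fin k), (((-1 : R) ^ S.card *
        (N.submatrix (Subtype.val : {a // a ∈ S} → Fin k) Subtype.val).det)
        • N ^ (k - S.card)) = 0 := by
  have h := Matrix.aeval_self_charpoly N
  rw [charpoly_eq_sum_minors, map_sum] at h
  simpa only [_root_.map_mul, Polynomial.aeval_C, Polynomial.aeval_X_pow,
    Algebra.algebraMap_eq_smul_one, smul_mul_assoc, one_mul, mul_smul] using h

open Polynomial Matrix in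
private lemma grouped_sum_minors_pow_eq_zero {R : Type*} [CommRing R] {k : ℕ}
    (N : Matrix (Fin k) (Fin k) R) (α : ℕ → R)
    (hα : ∀ j, α j = ∑ S ∈ Finset.univ.filter (fun S : Finset (Fin k) => S.card = j),
      (N.submatrix (Subtype.val : {a // a ∈ S} → Fin k) Subtype.val).det) :
    ∑ j ∈ Finset.range (k+1), ((-1 : R) ^ j * α j) • N ^ (k - j) = 0 := by
  have h := sum_minors_pow_eq_zero N
  rw [← Finset.sum_fiberwise_of_maps_to (g := Finset.card) (t := Finset.range (k+1))
    (fun S _ => Finset.mem_range.mpr (Nat.lt_succ_of_le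
      (le_trans (Finset.card_le_univ S) (by simp))))] at h
  rw [← h]
  refine Finset.sum_congr rfl fun j hj => ?_
  rw [hα, Finset.mul_sum, Finset.sum_smul]
  refine Finset.sum_congr rfl fun S hS => ?_
  rw [(Finset.mem_filter.mp hS).2]

/-- conjugation of a matrix-induced endomorphism of `Fin k → 𝕜` by `Φ` and `Ψ`,
as a linear map. -/
noncomputable def conjMap {𝕜 V : Type*} [Field 𝕜] [AddCommGroup V] [Module 𝕜 V] {k : ℕ}
    (Φ : (Fin k → 𝕜) →ₗ[𝕜] V) (Ψ : V →ₗ[𝕜] (Fin k → 𝕜)) :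
    Matrix (Fin k) (Fin k) 𝕜 →ₗ[𝕜] Module.End 𝕜 V where
  toFun N := Φ ∘ₗ (Matrix.toLin' N) ∘ₗ Ψ
  map_add' N₁ N₂ := by
    show Φ ∘ₗ (Matrix.toLin' (N₁ + N₂)) ∘ₗ Ψ
        = Φ ∘ₗ (Matrix.toLin' N₁) ∘ₗ Ψ + Φ ∘ₗ (Matrix.toLin' N₂) ∘ₗ Ψ
    rw [map_add, LinearMap.add_comp, LinearMap.comp_add]
  map_smul' c N := by
    show Φ ∘ₗ (Matrix.toLin' (c • N)) ∘ₗ Ψ = (RingHom.id 𝕜) c • (Φ ∘ₗ (Matrix.toLin' N) ∘ₗ Ψ)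
    rw [map_smul, LinearMap.smul_comp, LinearMap.comp_smul]
    rfl

/-- the `m`-th order approximation formula is exact for `m ≥ k`. With
`Q = ∑ i, v i ⊗ p i`, `u i = B⁻¹ (v i)`, `α i = ∑_{|S| = i} D(p,u,S)` and
`d = 1 + ∑_{i=1}^{k} α i ≠ 0`, for every `m ≥ k` the operator `B + Q` is invertible and
`(B + Q)⁻¹ = B⁻¹ + d⁻¹ • ∑_{i=1}^{m} (-1)^i (1 + ∑_{j=1}^{m-i} α j) (B⁻¹ Q)^i B⁻¹`. -/
theorem inverse_approximation_exact_of_rank_le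
    (𝕜 V : Type*) [Field 𝕜] [AddCommGroup V] [Module 𝕜 V] [FiniteDimensional 𝕜 V]
    {n k : ℕ} (hn : finrank 𝕜 V = n)
    (B : V ≃ₗ[𝕜] V) (v : Fin k → V) (p : Fin k → Dual 𝕜 V)
    (Q : Module.End 𝕜 V) (hQ : Q = ∑ i, (p i).smulRight (v i))
    (u : Fin k → V) (hu : ∀ i, u i = B.symm (v i))
    (α : ℕ → 𝕜)
    (hα : ∀ i, α i = ∑ S ∈ Finset.univ.filter (fun S : Finset (Fin k) => S.card = i),
        detD p u S)
    (d : 𝕜) (hd : d = 1 + ∑ i ∈ Finset.Icc 1 k, α i) (hd0 : d ≠ 0)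
    (m : ℕ) (hm : k ≤ m) :
    IsUnit ((B : Module.End 𝕜 V) + Q) ∧
    Ring.inverse ((B : Module.End 𝕜 V) + Q) =
      (B.symm : Module.End 𝕜 V) +
        d⁻¹ • ∑ i ∈ Finset.Icc 1 m,
          ((-1 : 𝕜) ^ i * (1 + ∑ j ∈ Finset.Icc 1 (m - i), α j)) •
            (((B.symm : Module.End 𝕜 V) * Q) ^ i * (B.symm : Module.End 𝕜 V)) := by
  classical
  set A : Module.End 𝕜 V := ∑ i, (p i).smulRight (u i) with hAdef
  have hA : (B.symm : Module.End 𝕜 V) * Q = A := by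
    ext x
    simp [hAdef, hQ, Module.End.mul_apply, LinearMap.sum_apply, map_sum, map_smul, hu,
      LinearMap.smulRight_apply]
  set M : Matrix (Fin k) (Fin k) 𝕜 := Matrix.of (fun i j => p i (u j)) with hM
  have hαM : ∀ j, α j = ∑ S ∈ Finset.univ.filter (fun S : Finset (Fin k) => S.card = j),
      (M.submatrix (Subtype.val : {a // a ∈ S} → Fin k) Subtype.val).det := fun j => hα j
  -- Φ and Ψ
  set Φ : (Fin k → 𝕜) →ₗ[𝕜] V :=
    ∑ i, ((LinearMap.proj i : (Fin k → 𝕜) →ₗ[𝕜] 𝕜).smulRight (u i)) with hΦ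
  set Ψ : V →ₗ[𝕜] (Fin k → 𝕜) := LinearMap.pi (fun i => (p i : V →ₗ[𝕜] 𝕜)) with hΨ
  have hΦΨ : Φ ∘ₗ Ψ = A := by
    ext x
    simp [hΦ, hΨ, hAdef, LinearMap.sum_apply]
  have hΨΦ : ∀ c, Ψ (Φ c) = Matrix.toLin' M c := by
    intro c
    funext i
    simp [hΦ, hΨ, hM, Matrix.toLin'_apply, Matrix.mulVec, dotProduct,
      LinearMap.sum_apply, map_sum, map_smul, mul_comm]
  have hpow : ∀ r : ℕ, A ^ (r + 1) = conjMap Φ Ψ (M ^ r) := by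
    intro r
    induction r with
    | zero =>
      show A ^ 1 = Φ ∘ₗ (Matrix.toLin' (M ^ 0)) ∘ₗ Ψ
      rw [pow_one, pow_zero, Matrix.toLin'_one, LinearMap.id_comp, hΦΨ]
    | succ r ih =>
      have h1 : A ^ (r + 1 + 1) = A ^ (r + 1) * A := by rw [pow_succ]
      rw [h1, ih, ← hΦΨ]
      ext x
      show Φ (Matrix.toLin' (M ^ r) (Ψ (Φ (Ψ x)))) = Φ (Matrix.toLin' (M ^ (r+1)) (Ψ x))
      rw [hΨΦ, ← Matrix.toLin'_mul_apply, ← pow_succ]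
  -- vanishing of α beyond k, and α 0 = 1
  have hαz : ∀ j, k < j → α j = 0 := by
    intro j hj
    rw [hα, Finset.filter_eq_empty_iff.mpr, Finset.sum_empty]
    intro S _
    have hcard : S.card ≤ k := by simpa using Finset.card_le_univ S
    omega
  have hα0 : α 0 = 1 := by
    rw [hα]
    have h0 : Finset.univ.filter (fun S : Finset (Fin k) => S.card = 0) = {∅} := by
      ext S; simp [Finset.card_eq_zero]
    rw [h0, Finset.sum_singleton]
    haveI : IsEmpty {a // a ∈ (∅ : Finset (Fin k))} :=
      ⟨fun x => Finset.notMem_empty _ x.2⟩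
    unfold detD
    exact Matrix.det_isEmpty
  -- the key Cayley–Hamilton identity transported to V
  have hKey : ∑ j ∈ Finset.range (k+1), ((-1 : 𝕜) ^ j * α j) • A ^ (k + 1 - j) = 0 := by
    have ht : ∀ j ∈ Finset.range (k+1), ((-1 : 𝕜) ^ j * α j) • A ^ (k + 1 - j)
        = conjMap Φ Ψ (((-1 : 𝕜) ^ j * α j) • M ^ (k - j)) := by
      intro j hj
      have hj' : j ≤ k := Nat.lt_succ_iff.mp (Finset.mem_range.mp hj)
      rw [map_smul, show k + 1 - j = (k - j) + 1 by omega, hpow (k - j)]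
    rw [Finset.sum_congr rfl ht, ← map_sum, grouped_sum_minors_pow_eq_zero M α hαM, map_zero]
  have hSkey : ∀ r, k ≤ r →
      ∑ j ∈ Finset.range (r+1), ((-1 : 𝕜) ^ j * α j) • A ^ (r + 1 - j) = 0 := by
    intro r hr
    rw [← Finset.sum_range_add_sum_Ico _ (Nat.succ_le_succ hr)]
    have h2 : ∑ j ∈ Finset.Ico (k+1) (r+1), ((-1 : 𝕜) ^ j * α j) • A ^ (r + 1 - j) = 0 := by
      refine Finset.sum_eq_zero fun j hj => ?_
      rw [hαz j (by have := (Finset.mem_Ico.mp hj).1; omega), mul_zero, zero_smul]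
    have h1 : ∑ j ∈ Finset.range (k+1), ((-1 : 𝕜) ^ j * α j) • A ^ (r + 1 - j)
        = A ^ (r - k) * ∑ j ∈ Finset.range (k+1), ((-1 : 𝕜) ^ j * α j) • A ^ (k + 1 - j) := by
      rw [Finset.mul_sum]
      refine Finset.sum_congr rfl fun j hj => ?_
      have hj' : j ≤ k := Nat.lt_succ_iff.mp (Finset.mem_range.mp hj)
      rw [mul_smul_comm, ← pow_add, show r - k + (k + 1 - j) = r + 1 - j by omega]
    rw [h1, hKey, mul_zero, h2, add_zero]
  -- the coefficients β
  set β : ℕ → 𝕜 := fun r => 1 + ∑ j ∈ Finset.Icc 1 r, α j with hβ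
  have hβ0 : β 0 = 1 := by simp [hβ]
  have hβm : β m = d := by
    rw [hd]
    have hsum_eq : ∑ j ∈ Finset.Icc 1 m, α j = ∑ j ∈ Finset.Icc 1 k, α j :=
      (Finset.sum_subset (Finset.Icc_subset_Icc_right hm) (fun x hx hnx => hαz x (by
        simp only [Finset.mem_Icc] at hx hnx; omega))).symm
    simp only [hβ]
    rw [hsum_eq]
  have hβstep : ∀ i, i < m → β (m - i) = β (m - (i+1)) + α (m - i) := by
    intro i hi
    have h1 : m - i = (m - (i+1)) + 1 := by omega
    simp only [hβ]
    rw [h1, Finset.sum_Icc_succ_top (Nat.succ_le_succ (Nat.zero_le _))]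
    ring
  -- the approximate inverse G (up to the factor d⁻¹ and right factor B⁻¹)
  set G : Module.End 𝕜 V := ∑ i ∈ Finset.range (m+1), ((-1 : 𝕜) ^ i * β (m - i)) • A ^ i with hG
  have hAG : A * G = ∑ i ∈ Finset.range (m+1), ((-1 : 𝕜) ^ i * β (m - i)) • A ^ (i+1) := by
    rw [hG, Finset.mul_sum]
    exact Finset.sum_congr rfl fun i _ => by rw [mul_smul_comm, ← pow_succ']
  have hEG : (1 + A) * G = d • (1 : Module.End 𝕜 V) := by
    have e1 : (1 + A) * G = G + A * G := by rw [add_mul, one_mul]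
    rw [e1, hAG, hG]
    rw [Finset.sum_range_succ' (fun i => ((-1 : 𝕜) ^ i * β (m - i)) • A ^ i) m]
    rw [Finset.sum_range_succ (fun i => ((-1 : 𝕜) ^ i * β (m - i)) • A ^ (i+1)) m]
    have e2 : ∑ i ∈ Finset.range m, ((-1 : 𝕜) ^ (i+1) * β (m - (i+1))) • A ^ (i+1)
        + ∑ i ∈ Finset.range m, ((-1 : 𝕜) ^ i * β (m - i)) • A ^ (i+1)
        = ∑ i ∈ Finset.range m, ((-1 : 𝕜) ^ i * α (m - i)) • A ^ (i+1) := by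
      rw [← Finset.sum_add_distrib]
      refine Finset.sum_congr rfl fun i hi => ?_
      rw [← add_smul]
      congr 1
      rw [hβstep i (Finset.mem_range.mp hi)]
      ring
    have e3 : ∑ i ∈ Finset.range (m+1), ((-1 : 𝕜) ^ i * α (m - i)) • A ^ (i+1) = 0 := by
      have hrefl := Finset.sum_range_reflect
        (fun i => ((-1 : 𝕜) ^ i * α (m - i)) • A ^ (i+1)) (m+1)
      rw [← hrefl]
      have hterm : ∀ j ∈ Finset.range (m+1),
          ((-1 : 𝕜) ^ (m + 1 - 1 - j) * α (m - (m + 1 - 1 - j))) • A ^ ((m + 1 - 1 - j) + 1)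
          = (-1 : 𝕜) ^ m • (((-1 : 𝕜) ^ j * α j) • A ^ (m + 1 - j)) := by
        intro j hj
        have hj' : j ≤ m := Nat.lt_succ_iff.mp (Finset.mem_range.mp hj)
        have h4 : m + 1 - 1 - j = m - j := by omega
        have hsq : ((-1 : 𝕜) ^ j) * ((-1 : 𝕜) ^ j) = 1 := by
          rw [← mul_pow]; norm_num
        have h7 : (-1 : 𝕜) ^ (m - j) = (-1 : 𝕜) ^ m * (-1 : 𝕜) ^ j := by
          have h8 : (-1 : 𝕜) ^ (m - j) * (-1 : 𝕜) ^ j = (-1 : 𝕜) ^ m := by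
            rw [← pow_add, show m - j + j = m by omega]
          calc (-1 : 𝕜) ^ (m - j) = ((-1 : 𝕜) ^ (m - j) * (-1 : 𝕜) ^ j) * (-1 : 𝕜) ^ j := by
                rw [mul_assoc, hsq, mul_one]
            _ = (-1 : 𝕜) ^ m * (-1 : 𝕜) ^ j := by rw [h8]
        rw [h4, show m - (m - j) = j by omega, show (m - j) + 1 = m + 1 - j by omega, h7,
          mul_assoc, mul_smul]
      rw [Finset.sum_congr rfl hterm, ← Finset.smul_sum, hSkey m hm, smul_zero]
    have e6 : ∑ i ∈ Finset.range m, ((-1 : 𝕜) ^ (i+1) * β (m - (i+1))) • A ^ (i+1)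
          + ((-1 : 𝕜) ^ 0 * β (m - 0)) • A ^ 0
        + (∑ i ∈ Finset.range m, ((-1 : 𝕜) ^ i * β (m - i)) • A ^ (i+1)
          + ((-1 : 𝕜) ^ m * β (m - m)) • A ^ (m+1))
        = ((-1 : 𝕜) ^ 0 * β (m - 0)) • A ^ 0
          + ((∑ i ∈ Finset.range m, ((-1 : 𝕜) ^ (i+1) * β (m - (i+1))) • A ^ (i+1)
            + ∑ i ∈ Finset.range m, ((-1 : 𝕜) ^ i * β (m - i)) • A ^ (i+1))
          + ((-1 : 𝕜) ^ m * β (m - m)) • A ^ (m+1)) := by abel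
    rw [e6, e2]
    have e7 : ((-1 : 𝕜) ^ m * β (m - m)) • A ^ (m+1)
        = ((-1 : 𝕜) ^ m * α (m - m)) • A ^ (m+1) := by
      rw [Nat.sub_self, hβ0, hα0]
    rw [e7, ← Finset.sum_range_succ (fun i => ((-1 : 𝕜) ^ i * α (m - i)) • A ^ (i+1)) m, e3,
      add_zero]
    rw [pow_zero, one_mul, Nat.sub_zero, pow_zero, hβm]
  -- commutation
  have hcommAG : Commute A G := by
    refine Commute.sum_right _ _ _ fun i _ => ?_
    exact ((Commute.refl A).pow_right i).smul_right _
  have hcommEG : Commute (1 + A) G := Commute.add_left (Commute.one_left G) hcommAG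
  -- the inverse
  have hBB : (B : Module.End 𝕜 V) * (B.symm : Module.End 𝕜 V) = 1 := by
    ext x; simp [Module.End.mul_apply]
  have hB'B : (B.symm : Module.End 𝕜 V) * (B : Module.End 𝕜 V) = 1 := by
    ext x; simp [Module.End.mul_apply]
  have hT : (B : Module.End 𝕜 V) + Q = (B : Module.End 𝕜 V) * (1 + A) := by
    rw [mul_add, mul_one, ← hA, ← mul_assoc, hBB, one_mul]
  have hEF : (1 + A) * (d⁻¹ • G) = 1 := by
    rw [mul_smul_comm, hEG, smul_smul, inv_mul_cancel₀ hd0, one_smul]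
  have hFE : (d⁻¹ • G) * (1 + A) = 1 := by
    rw [smul_mul_assoc, ← hcommEG.eq, hEG, smul_smul, inv_mul_cancel₀ hd0, one_smul]
  set X : Module.End 𝕜 V := (d⁻¹ • G) * (B.symm : Module.End 𝕜 V) with hX
  have hTX : ((B : Module.End 𝕜 V) + Q) * X = 1 := by
    rw [hT, hX, mul_assoc, ← mul_assoc (1 + A), hEF, one_mul, hBB]
  have hXT : X * ((B : Module.End 𝕜 V) + Q) = 1 := by
    rw [hT, hX, mul_assoc, ← mul_assoc (B.symm : Module.End 𝕜 V), hB'B, one_mul, hFE]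
  let uT : (Module.End 𝕜 V)ˣ := ⟨(B : Module.End 𝕜 V) + Q, X, hTX, hXT⟩
  refine ⟨⟨uT, rfl⟩, ?_⟩
  rw [show ((B : Module.End 𝕜 V) + Q) = (uT : Module.End 𝕜 V) from rfl, Ring.inverse_unit]
  show X = _
  -- final rewriting of X into the required form
  rw [hA, hX, smul_mul_assoc, hG, Finset.sum_mul]
  have hsplit : Finset.range (m+1) = insert 0 (Finset.Icc 1 m) := by
    ext x
    simp only [Finset.mem_range, Finset.mem_insert, Finset.mem_Icc]
    omega
  rw [hsplit, Finset.sum_insert (by simp)]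
  rw [smul_add]
  congr 1
  rw [pow_zero, one_mul, Nat.sub_zero, pow_zero, hβm, smul_mul_assoc, one_mul, smul_smul,
    inv_mul_cancel₀ hd0, one_smul]
end

section
/- Let V be a finite-dimensional vector space over a field 𝕜, let B : V → V be an invertible linear map, let v_1, v_2 ∈ V and p_1, p_2 ∈ V*, and set Q = v_1 ⊗ p_1 + v_2 ⊗ p_2, u_i = B⁻¹v_i, α₁ = p_1(u_1) + p_2(u_2), and α₂ = p_1(u_1)p_2(u_2) − p_1(u_2)p_2(u_1). If 1 + α₁ + α₂ ≠ 0, then B + Q is invertible and (B + Q)⁻¹ = B⁻¹ − ((1 + α₁)/(1 + α₁ + α₂)) · B⁻¹ ∘ Q ∘ B⁻¹ + (1/(1 + α₁ + α₂)) · B⁻¹ ∘ Q ∘ B⁻¹ ∘ Q ∘ B⁻¹. -/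
open Module

/-- second-order formula, exact for a rank-two perturbation: with
`Q = v₁ ⊗ p₁ + v₂ ⊗ p₂`, `uᵢ = B⁻¹ vᵢ`, `α₁ = p₁(u₁) + p₂(u₂)` and
`α₂ = p₁(u₁)p₂(u₂) - p₁(u₂)p₂(u₁)`, if `1 + α₁ + α₂ ≠ 0` then `B + Q` is invertible and
`(B + Q)⁻¹ = B⁻¹ - ((1+α₁)/(1+α₁+α₂)) • B⁻¹QB⁻¹ + (1/(1+α₁+α₂)) • B⁻¹QB⁻¹QB⁻¹`. -/
theorem inverse_rank_two_perturbation
    (𝕜 V : Type*) [Field 𝕜] [AddCommGroup V] [Module 𝕜 V] [FiniteDimensional 𝕜 V]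
    (B : V ≃ₗ[𝕜] V) (v₁ v₂ : V) (p₁ p₂ : Dual 𝕜 V)
    (Q : Module.End 𝕜 V) (hQ : Q = p₁.smulRight v₁ + p₂.smulRight v₂)
    (u₁ u₂ : V) (hu₁ : u₁ = B.symm v₁) (hu₂ : u₂ = B.symm v₂)
    (α₁ α₂ : 𝕜) (hα₁ : α₁ = p₁ u₁ + p₂ u₂)
    (hα₂ : α₂ = p₁ u₁ * p₂ u₂ - p₁ u₂ * p₂ u₁)
    (h : 1 + α₁ + α₂ ≠ 0) :
    IsUnit ((B : Module.End 𝕜 V) + Q) ∧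
    Ring.inverse ((B : Module.End 𝕜 V) + Q) =
      (B.symm : Module.End 𝕜 V) -
        ((1 + α₁) / (1 + α₁ + α₂)) •
          ((B.symm : Module.End 𝕜 V) * Q * (B.symm : Module.End 𝕜 V)) +
        (1 / (1 + α₁ + α₂)) •
          ((B.symm : Module.End 𝕜 V) * Q * (B.symm : Module.End 𝕜 V) * Q *
            (B.symm : Module.End 𝕜 V)) := by
  set S : Module.End 𝕜 V := (B.symm : Module.End 𝕜 V) with hS
  set B' : Module.End 𝕜 V := (B : Module.End 𝕜 V) with hB'
  have hBS : B' * S = 1 := by ext x; simp [hS, hB', Module.End.mul_apply]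
  have hSB : S * B' = 1 := by ext x; simp [hS, hB', Module.End.mul_apply]
  have key : Q * S * Q * S * Q = α₁ • (Q * S * Q) - α₂ • Q := by
    subst hα₁ hα₂ hu₁ hu₂ hQ
    ext x
    simp only [Module.End.mul_apply, LinearMap.add_apply, LinearMap.smulRight_apply,
      LinearMap.sub_apply, LinearMap.smul_apply, map_add, map_smul, smul_add, hS,
      LinearEquiv.coe_coe, smul_smul]
    module
  set C : Module.End 𝕜 V :=
    S - ((1 + α₁) / (1 + α₁ + α₂)) • (S * Q * S) +
      (1 / (1 + α₁ + α₂)) • (S * Q * S * Q * S) with hC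
  have keyR : Q * S * Q * S * Q * S = α₁ • (Q * S * Q * S) - α₂ • (Q * S) := by
    calc Q * S * Q * S * Q * S = (Q * S * Q * S * Q) * S := by simp only [mul_assoc]
    _ = _ := by rw [key, sub_mul, smul_mul_assoc, smul_mul_assoc]
  have keyL : S * Q * S * Q * S * Q = α₁ • (S * Q * S * Q) - α₂ • (S * Q) := by
    calc S * Q * S * Q * S * Q = S * (Q * S * Q * S * Q) := by
          simp only [mul_assoc]
    _ = _ := by rw [key, mul_sub, mul_smul_comm, mul_smul_comm]; simp only [mul_assoc]
  have hr : (B' + Q) * C = 1 := by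
    simp only [hC, mul_sub, mul_add, add_mul, mul_smul_comm, ← mul_assoc, hBS, one_mul]
    rw [keyR]
    match_scalars <;> field_simp <;> ring
  have hl : C * (B' + Q) = 1 := by
    simp only [hC, mul_add, add_mul, sub_mul, smul_mul_assoc, mul_assoc, hSB, mul_one]
    simp only [← mul_assoc]
    rw [keyL]
    match_scalars <;> field_simp <;> ring
  refine ⟨⟨⟨B' + Q, C, hr, hl⟩, rfl⟩, ?_⟩
  rw [Ring.inverse_unit ⟨B' + Q, C, hr, hl⟩]; rfl
end

section
/- Let E be a nontrivial finite-dimensional normed vector space over ℝ (or ℂ), and let ι denote the inversion map defined on the open set of invertible continuous linear endomorphisms of E by ι(B) = B⁻¹. Then ι is infinitely differentiable at every invertible B, and for every i ≥ 1 and every continuous linear endomorphism Q of E, the i-th Fréchet derivative of ι at B evaluated at the i-tuple (Q, Q, …, Q) equals (−1)^i · i! · (B⁻¹ ∘ Q)^i ∘ B⁻¹. -/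
open scoped Topology NNReal ENNReal

section Aux

variable {𝕜 : Type*} [NontriviallyNormedField 𝕜] {A : Type*} [NormedRing A] [NormedAlgebra 𝕜 A]

/-- The formal power series of `Ring.inverse` at a unit `B` with inverse `C`:
`q n (v) = (-1)^n • (C v₀) (C v₁) ⋯ (C v_{n-1}) C`. -/
noncomputable def invSeries (𝕜 : Type*) [NontriviallyNormedField 𝕜] (A : Type*) [NormedRing A]
    [NormedAlgebra 𝕜 A] (C : A) : FormalMultilinearSeries 𝕜 A A := fun n =>
  ((-1 : 𝕜) ^ n) • ((ContinuousLinearMap.mul 𝕜 A).flip C).compContinuousMultilinearMap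
    ((ContinuousMultilinearMap.mkPiAlgebraFin 𝕜 n A).compContinuousLinearMap
      (fun _ => ContinuousLinearMap.mul 𝕜 A C))

lemma invSeries_apply_diag (C : A) (n : ℕ) (y : A) :
    invSeries 𝕜 A C n (fun _ => y) = (-1 : 𝕜) ^ n • ((C * y) ^ n * C) := by
  simp [invSeries, List.ofFn_const, List.prod_replicate]

lemma invSeries_norm_le (C : A) (n : ℕ) :
    ‖invSeries 𝕜 A C n‖ ≤ (max 1 ‖(1 : A)‖ * ‖C‖) * ‖C‖ ^ n := by
  have h1 : ‖invSeries 𝕜 A C n‖ ≤ ‖((ContinuousLinearMap.mul 𝕜 A).flip C).compContinuousMultilinearMap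
      ((ContinuousMultilinearMap.mkPiAlgebraFin 𝕜 n A).compContinuousLinearMap
        (fun _ => ContinuousLinearMap.mul 𝕜 A C))‖ := by
    have hns := norm_smul ((-1 : 𝕜) ^ n)
      (((ContinuousLinearMap.mul 𝕜 A).flip C).compContinuousMultilinearMap
        ((ContinuousMultilinearMap.mkPiAlgebraFin 𝕜 n A).compContinuousLinearMap
          (fun _ => ContinuousLinearMap.mul 𝕜 A C)))
    rw [invSeries, hns, norm_pow, norm_neg, norm_one, one_pow, one_mul]
  refine h1.trans ?_
  have h2 : ‖(ContinuousLinearMap.mul 𝕜 A).flip C‖ ≤ ‖C‖ := by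
    refine ContinuousLinearMap.opNorm_le_bound _ (norm_nonneg C) fun x => ?_
    simpa [mul_comm] using norm_mul_le x C
  calc ‖((ContinuousLinearMap.mul 𝕜 A).flip C).compContinuousMultilinearMap _‖
      ≤ ‖(ContinuousLinearMap.mul 𝕜 A).flip C‖ *
        ‖(ContinuousMultilinearMap.mkPiAlgebraFin 𝕜 n A).compContinuousLinearMap
          (fun _ => ContinuousLinearMap.mul 𝕜 A C)‖ :=
        ContinuousLinearMap.norm_compContinuousMultilinearMap_le _ _
    _ ≤ ‖C‖ * (‖ContinuousMultilinearMap.mkPiAlgebraFin 𝕜 n A‖ *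
          ∏ _i : Fin n, ‖ContinuousLinearMap.mul 𝕜 A C‖) := by
        refine mul_le_mul h2 ?_ (ContinuousMultilinearMap.opNorm_nonneg _) (norm_nonneg _)
        exact ContinuousMultilinearMap.norm_compContinuousLinearMap_le _ _
    _ ≤ ‖C‖ * (max 1 ‖(1 : A)‖ * ‖C‖ ^ n) := by
        refine mul_le_mul_of_nonneg_left ?_ (norm_nonneg _)
        refine mul_le_mul ?_ ?_ (Finset.prod_nonneg fun _ _ => norm_nonneg _) ?_
        · simpa [max_comm] using ContinuousMultilinearMap.norm_mkPiAlgebraFin_le (A := A) (n := n)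
        · calc (∏ _i : Fin n, ‖ContinuousLinearMap.mul 𝕜 A C‖)
              ≤ ∏ _i : Fin n, ‖C‖ := by
                refine Finset.prod_le_prod (fun _ _ => norm_nonneg _)
                  (fun _ _ => ContinuousLinearMap.opNorm_mul_apply_le 𝕜 A C)
            _ = ‖C‖ ^ n := by simp
        · positivity
    _ = (max 1 ‖(1 : A)‖ * ‖C‖) * ‖C‖ ^ n := by ring

variable [CompleteSpace A]

lemma invSeries_hasFPowerSeriesOnBall (B : A) (hB : IsUnit B) (h1 : Nontrivial A) :
    HasFPowerSeriesOnBall (Ring.inverse : A → A) (invSeries 𝕜 A (Ring.inverse B)) B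
      ((‖Ring.inverse B‖₊⁻¹ : ℝ≥0) : ℝ≥0∞) := by
  set C := Ring.inverse B with hC
  have hBC : B * C = 1 := Ring.mul_inverse_cancel B hB
  have hCnz : C ≠ 0 := by
    intro h
    rw [h, mul_zero] at hBC
    exact one_ne_zero hBC.symm
  have hCpos : (0 : ℝ) < ‖C‖ := norm_pos_iff.2 hCnz
  constructor
  · -- radius bound
    refine FormalMultilinearSeries.le_radius_of_bound _ (max 1 ‖(1 : A)‖ * ‖C‖) fun n => ?_
    have := invSeries_norm_le (𝕜 := 𝕜) C n
    have hcoe : ((‖C‖₊⁻¹ : ℝ≥0) : ℝ) = ‖C‖⁻¹ := by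
      simp [NNReal.coe_inv]
    rw [hcoe]
    calc ‖invSeries 𝕜 A C n‖ * ‖C‖⁻¹ ^ n
        ≤ ((max 1 ‖(1 : A)‖ * ‖C‖) * ‖C‖ ^ n) * ‖C‖⁻¹ ^ n := by
          refine mul_le_mul_of_nonneg_right this (by positivity)
      _ = (max 1 ‖(1 : A)‖ * ‖C‖) * (‖C‖ * ‖C‖⁻¹) ^ n := by ring
      _ = max 1 ‖(1 : A)‖ * ‖C‖ := by
          rw [mul_inv_cancel₀ (ne_of_gt hCpos), one_pow, mul_one]
  · -- r_pos
    simpa using (by simpa using hCnz : ‖C‖₊ ≠ 0)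
  · -- hasSum
    intro y hy
    rw [EMetric.mem_ball, edist_zero_right] at hy
    have hy' : ‖y‖ < ‖C‖⁻¹ := by
      have : ((‖y‖₊ : ℝ≥0) : ℝ≥0∞) < ((‖C‖₊⁻¹ : ℝ≥0) : ℝ≥0∞) := hy
      rw [ENNReal.coe_lt_coe] at this
      have h2 : (‖y‖₊ : ℝ) < ((‖C‖₊⁻¹ : ℝ≥0) : ℝ) := by exact_mod_cast this
      simpa [NNReal.coe_inv] using h2
    have ht : ‖-(C * y)‖ < 1 := by
      rw [norm_neg]
      calc ‖C * y‖ ≤ ‖C‖ * ‖y‖ := norm_mul_le _ _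
        _ < ‖C‖ * ‖C‖⁻¹ := by exact mul_lt_mul_of_pos_left hy' hCpos
        _ = 1 := mul_inv_cancel₀ (ne_of_gt hCpos)
    set u : Aˣ := Units.oneSub (-(C * y)) ht with hu
    have huval : (u : A) = 1 + C * y := by simp [hu, sub_neg_eq_add]
    have hkey : B + y = ((hB.unit * u : Aˣ) : A) := by
      rw [Units.val_mul, IsUnit.unit_spec, huval, mul_add, mul_one, ← mul_assoc, hBC, one_mul]
    have hinv : Ring.inverse (B + y) = (↑u⁻¹ : A) * C := by
      rw [hkey, Ring.inverse_unit, mul_inv_rev, Units.val_mul]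
      congr 1
      rw [← Ring.inverse_unit hB.unit, IsUnit.unit_spec]
    have hgeom : HasSum (fun n : ℕ => (-(C * y)) ^ n) (↑u⁻¹ : A) :=
      (summable_geometric_of_norm_lt_one ht).hasSum
    have hsum : HasSum (fun n : ℕ => (-(C * y)) ^ n * C) (Ring.inverse (B + y)) := by
      rw [hinv]; exact hgeom.mul_right C
    convert hsum using 2 with n
    · rfl
    rw [invSeries_apply_diag, Algebra.smul_def, map_pow, map_neg, map_one,
      neg_pow (C * y), mul_assoc]

end Aux

/-- the inversion map `ι B = B⁻¹` on continuous linear endomorphisms of a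
nontrivial finite-dimensional normed space is `C^∞` at every invertible `B`, and its `i`-th
Fréchet derivative at `B`, evaluated at the `i`-tuple `(Q, …, Q)`, equals
`(-1)^i * i! • ((B⁻¹ ∘ Q)^i ∘ B⁻¹)`. -/
theorem inversion_iteratedFDeriv
    (𝕜 E : Type*) [RCLike 𝕜] [NormedAddCommGroup E] [NormedSpace 𝕜 E]
    [FiniteDimensional 𝕜 E] [Nontrivial E]
    (B : E →L[𝕜] E) (hB : IsUnit B) :
    ContDiffAt 𝕜 (⊤ : ℕ∞) (Ring.inverse : (E →L[𝕜] E) → (E →L[𝕜] E)) B ∧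
    ∀ i : ℕ, 1 ≤ i → ∀ Q : E →L[𝕜] E,
      iteratedFDeriv 𝕜 i (Ring.inverse : (E →L[𝕜] E) → (E →L[𝕜] E)) B (fun _ => Q) =
        ((-1 : 𝕜) ^ i * (Nat.factorial i : 𝕜)) •
          ((Ring.inverse B * Q) ^ i * Ring.inverse B) := by
  have : CompleteSpace E := FiniteDimensional.complete 𝕜 E
  have hnt : Nontrivial (E →L[𝕜] E) := by
    obtain ⟨x, hx⟩ := exists_ne (0 : E)
    refine ⟨1, 0, fun h => hx ?_⟩
    have := congrArg (fun f : E →L[𝕜] E => f x) h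
    simpa using this
  have h := invSeries_hasFPowerSeriesOnBall (𝕜 := 𝕜) B hB hnt
  constructor
  · exact (h.analyticAt).contDiffAt
  · intro i _ Q
    have key := h.factorial_smul Q i
    rw [invSeries_apply_diag] at key
    rw [← key, smul_comm, mul_smul, ← Nat.cast_smul_eq_nsmul 𝕜 (Nat.factorial i)]
end
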